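/- arXiv:1307.2171 — 3 statements merged into one kernel-verified Lean document; each statement's English description precedes it below -/
import Mathlib

section
/- Let V be a finite-dimensional real vector space and q, q' quadratic forms on V. If there exists a linear automorphism f of V with q'(v) = q(f v) for all v ∈ V, then there exists a linear automorphism g of V with determinant det(g) > 0 such that q'(v) = q(g v) for all v ∈ V. (Equivalently: the orbits of the full general linear group GL(V) acting on quadratic forms by precomposition coincide with the orbits of its identity component, which consists of the automorphisms of positive determinant.) -/
/-!
If `q' = q ∘ f` with `det f < 0`, precompose `f` with an isometry `s` of `q'` of determinant `-1`;
then `q' = q ∘ (f ∘ s)` and `det (f ∘ s) > 0`. Such an `s` exists as soon as `V ≠ 0`: in a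
`q'`-orthogonal basis, negating one basis vector preserves `q'`. If `V = 0`, every automorphism
has determinant `1`.
-/

open Module QuadraticMap

theorem QuadraticForm.apply_basis_equiv_of_iIsOrtho {ι R M : Type*} [Fintype ι] [CommRing R]
    [AddCommGroup M] [Module R M] [Invertible (2 : R)] (Q : QuadraticForm R M)
    {b b' : Basis ι R M} (hb : (associated (R := R) Q).IsOrthoᵢ b)
    (hb' : (associated (R := R) Q).IsOrthoᵢ b') (hQ : ∀ i, Q (b' i) = Q (b i)) (v : M) :
    Q (b.equiv b' (Equiv.refl ι) v) = Q v := by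
  have hrepr : Q.basisRepr b' = Q.basisRepr b := by
    rw [basisRepr_eq_of_iIsOrtho Q b hb, basisRepr_eq_of_iIsOrtho Q b' hb']
    simp only [hQ]
  have hv : b.equiv b' (Equiv.refl ι) v = ∑ i, b.repr v i • b' i := by
    conv_lhs => rw [← b.sum_repr v]
    simp only [map_sum, map_smul, Basis.equiv_apply, Equiv.refl_apply]
  have := congr($hrepr (b.repr v))
  rwa [basisRepr_apply, basisRepr_apply, b.sum_repr, ← hv] at this

theorem QuadraticForm.exists_det_eq_neg_one_isometry {K V : Type*} [Field K] [Invertible (2 : K)]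
    [AddCommGroup V] [Module K V] [FiniteDimensional K V] (hV : 0 < finrank K V)
    (Q : QuadraticForm K V) :
    ∃ s : V ≃ₗ[K] V, LinearMap.det (s : V →ₗ[K] V) = -1 ∧ ∀ v, Q (s v) = Q v := by
  obtain ⟨b, hb⟩ := LinearMap.BilinForm.exists_orthogonal_basis (associated_isSymm K Q)
  set w : Fin (finrank K V) → Kˣ := Pi.mulSingle ⟨0, hV⟩ (-1)
  have hw : ∀ i, (w i : K) * w i = 1 := fun i => by
    rcases eq_or_ne i ⟨0, hV⟩ with rfl | hi <;> simp [w, *]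
  have hb' : (associated (R := K) Q).IsOrthoᵢ (b.unitsSMul w) := fun i j hij => by
    have hij' : associated (R := K) Q (b i) (b j) = 0 := hb hij
    simp only [Function.onFun, Basis.unitsSMul_apply, Units.smul_def, map_smul,
      LinearMap.smul_apply, hij', smul_zero]
  refine ⟨b.equiv (b.unitsSMul w) (Equiv.refl _), ?_,
    apply_basis_equiv_of_iIsOrtho Q hb hb' fun i => ?_⟩
  · rw [Basis.det_basis, Basis.det_unitsSMul_self, ← Units.coe_prod, Finset.prod_pi_mulSingle']
    simp
  · rw [Basis.unitsSMul_apply, Units.smul_def, QuadraticMap.map_smul, hw, one_smul]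

/-- The `GL(V)`-orbits on quadratic forms coincide with the orbits of the identity
component `GL₀(V)`: if two quadratic forms are related by a linear automorphism,
then they are related by a linear automorphism of positive determinant. -/
theorem orbit_eq_identity_component_orbit
    (V : Type*) [AddCommGroup V] [Module ℝ V] [FiniteDimensional ℝ V]
    (q q' : QuadraticForm ℝ V)
    (h : ∃ f : V ≃ₗ[ℝ] V, ∀ v, q' v = q (f v)) :
    ∃ g : V ≃ₗ[ℝ] V, 0 < LinearMap.det (g : V →ₗ[ℝ] V) ∧ ∀ v, q' v = q (g v) := by
  obtain ⟨f, hf⟩ := h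
  rcases f.isUnit_det'.ne_zero.lt_or_gt with hneg | hpos
  · have hV : 0 < finrank ℝ V := Nat.pos_of_ne_zero fun h0 => by
      rw [LinearMap.det_eq_one_of_finrank_eq_zero h0] at hneg
      norm_num at hneg
    obtain ⟨s, hs_det, hs⟩ := q'.exists_det_eq_neg_one_isometry hV
    refine ⟨s.trans f, ?_, fun v => ?_⟩
    · rw [LinearEquiv.coe_trans, LinearMap.det_comp, hs_det]
      linarith
    · rw [← hs v, hf]
      rfl
  · exact ⟨f, hpos, hf⟩
end

section
/- Let X be a connected topological space and let E be a topological real vector bundle over X whose model fiber F is a finite-dimensional real normed space. Let q be a continuous real-valued function on the total space of E such that for each x ∈ X the restriction q_x of q to the fiber E_x is a quadratic form whose polar form is nondegenerate. Then the function assigning to each x ∈ X the positive index n₊(q_x) (the maximal dimension of a subspace of E_x on which q_x is positive definite) is constant on X; equivalently, the inertia (n₊(q_x), n₋(q_x)) does not depend on x. -/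
/-- The positive index of inertia of a quadratic form: the maximal dimension of a
subspace on which the form is positive definite. -/
noncomputable def posIndex {V : Type*} [AddCommGroup V] [Module ℝ V]
    (q : QuadraticForm ℝ V) : ℕ :=
  sSup {d : ℕ | ∃ W : Submodule ℝ V, Module.finrank ℝ W = d ∧ ∀ v ∈ W, v ≠ 0 → 0 < q v}

/-- The negative index of inertia of a quadratic form: the maximal dimension of a
subspace on which the form is negative definite. -/
noncomputable def negIndex {V : Type*} [AddCommGroup V] [Module ℝ V]
    (q : QuadraticForm ℝ V) : ℕ :=
  sSup {d : ℕ | ∃ W : Submodule ℝ V, Module.finrank ℝ W = d ∧ ∀ v ∈ W, v ≠ 0 → q v < 0}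

/-!
The positive index is lower semicontinuous: a positive definite subspace of one fibre, read in a
local trivialization, stays positive definite in nearby fibres, because positivity on its compact
unit sphere is an open condition. Applied to `-q`, the same holds for the negative index. By
nondegeneracy `n₊ + n₋` is the rank of the bundle, so both indices are locally constant, hence
constant on a connected base.
-/

open Module Bundle Topology Filter QuadraticMap QuadraticForm

lemma QuadraticMap.posDef_restrict_iff {R M N : Type*} [CommSemiring R] [AddCommMonoid M]
    [Module R M] [PartialOrder N] [AddCommMonoid N] [Module R N]
    (Q : QuadraticMap R M N) (W : Submodule R M) :
    (Q.restrict W).PosDef ↔ ∀ v ∈ W, v ≠ 0 → 0 < Q v := by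
  simp [PosDef]

section Index

variable {V : Type*} [AddCommGroup V] [Module ℝ V]

lemma posIndex_eq_sigPos [FiniteDimensional ℝ V] (q : QuadraticForm ℝ V) :
    posIndex q = sigPos q := by
  simp only [posIndex, ← posDef_restrict_iff]
  exact (sigPos_isGreatest q).csSup_eq

lemma negIndex_eq_sigNeg [FiniteDimensional ℝ V] (q : QuadraticForm ℝ V) :
    negIndex q = sigNeg q := by
  rw [← sigPos_neg, ← posIndex_eq_sigPos, negIndex, posIndex]
  simp

end Index

lemma sigPos_add_sigNeg_eq_finrank {𝕜 V : Type*} [Field 𝕜] [LinearOrder 𝕜] [IsStrictOrderedRing 𝕜]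
    [AddCommGroup V] [Module 𝕜 V] [FiniteDimensional 𝕜 V] (q : QuadraticForm 𝕜 V)
    (hnd : ∀ u, (∀ v, polar q u v = 0) → u = 0) :
    sigPos q + sigNeg q = finrank 𝕜 V := by
  have : Invertible (2 : 𝕜) := invertibleOfNonzero two_ne_zero
  have hrad : q.radical = ⊥ := by
    rw [radical_eq_ker_polarBilin, LinearMap.ker_eq_bot']
    exact fun u hu => hnd u fun v => LinearMap.congr_fun hu v
  have h := sigPos_add_sigNeg_add_radical (Q := q)
  rwa [hrad, finrank_bot, add_zero] at h

section LowerSemicontinuity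

variable {X : Type*} [TopologicalSpace X] {F : Type*} [NormedAddCommGroup F] [NormedSpace ℝ F]

lemma posDef_restrict_of_forall_norm_eq_one (q : QuadraticForm ℝ F) (W : Submodule ℝ F)
    (h : ∀ w ∈ W, ‖w‖ = 1 → 0 < q w) : (q.restrict W).PosDef := by
  rintro ⟨v, hv⟩ hv0
  have hn : 0 < ‖v‖ := norm_pos_iff.2 (by simpa using hv0)
  have hunit : 0 < q (‖v‖⁻¹ • v) :=
    h _ (W.smul_mem _ hv) (by rw [norm_smul, norm_inv, norm_norm, inv_mul_cancel₀ hn.ne'])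
  have hscale : q v = ‖v‖ ^ 2 * q (‖v‖⁻¹ • v) := by
    rw [QuadraticMap.map_smul, smul_eq_mul, ← mul_assoc]
    field_simp
  rw [restrict_apply, hscale]
  positivity

lemma eventually_sigPos_le [FiniteDimensional ℝ F] (Q : X → QuadraticForm ℝ F) {x : X}
    (hQ : ∀ w, ContinuousAt (fun p : X × F => Q p.1 p.2) (x, w)) :
    ∀ᶠ y in 𝓝 x, sigPos (Q x) ≤ sigPos (Q y) := by
  obtain ⟨W, hW, hpos⟩ := exists_finrank_eq_sigPos_and_posDef (Q x)
  have hK : IsCompact ((W : Set F) ∩ Metric.sphere 0 1) :=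
    (isCompact_sphere 0 1).inter_left W.closed_of_finiteDimensional
  have hnear : ∀ᶠ y in 𝓝 x, ∀ w ∈ (W : Set F) ∩ Metric.sphere 0 1, 0 < Q y w :=
    hK.eventually_forall_of_forall_eventually fun w ⟨hwW, hw1⟩ =>
      (hQ w).eventually (eventually_gt_nhds (hpos ⟨w, hwW⟩ fun h =>
        ne_zero_of_mem_sphere one_ne_zero ⟨w, hw1⟩ (congrArg Subtype.val h)))
  filter_upwards [hnear] with y hy
  exact hW ▸ le_sigPos_of_posDef _ (posDef_restrict_of_forall_norm_eq_one _ _ fun w hw h1 =>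
    hy w ⟨hw, by simpa using h1⟩)

end LowerSemicontinuity

lemma eventually_sigPos_le_of_vectorBundle
    {X : Type*} [TopologicalSpace X]
    {F : Type*} [NormedAddCommGroup F] [NormedSpace ℝ F] [FiniteDimensional ℝ F]
    {E : X → Type*} [∀ x, AddCommGroup (E x)] [∀ x, Module ℝ (E x)]
    [∀ x, TopologicalSpace (E x)] [TopologicalSpace (TotalSpace F E)]
    [FiberBundle F E] [VectorBundle ℝ F E]
    (q : TotalSpace F E → ℝ) (hq : Continuous q) (Q : ∀ x, QuadraticForm ℝ (E x))
    (hQ : ∀ (x : X) (v : E x), q ⟨x, v⟩ = Q x v) (x : X) :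
    ∀ᶠ y in 𝓝 x, sigPos (Q x) ≤ sigPos (Q y) := by
  have := VectorBundle.finiteDimensional ℝ F E
  let e := trivializationAt F E x
  -- `e.symmL ℝ y` is zero off `e.baseSet`, so `Qt y` describes `Q y` only for `y ∈ e.baseSet`.
  let Qt : X → QuadraticForm ℝ F := fun y => (Q y).comp (e.symmL ℝ y : F →ₗ[ℝ] E y)
  have hQt : ∀ y ∈ e.baseSet, sigPos (Qt y) = sigPos (Q y) := fun y hy => by
    have hQty : Qt y = (Q y).comp (e.continuousLinearEquivAt ℝ y hy).symm.toLinearEquiv := by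
      simp [Qt, ← e.symm_continuousLinearEquivAt_eq' hy]
    rw [hQty]
    exact Equivalent.sigPos_eq ⟨((Q y).isometryEquivOfCompLinearEquiv _).symm⟩
  have hx : x ∈ e.baseSet := mem_baseSet_trivializationAt F E x
  have hcont : ∀ w, ContinuousAt (fun p : X × F => Qt p.1 p.2) (x, w) := by
    intro w
    have hxw : (x, w) ∈ e.target := e.mem_target.2 hx
    refine (hq.continuousAt.comp (e.continuousAt_symm hxw)).congr ?_
    filter_upwards [e.open_target.mem_nhds hxw] with p hp
    simp [Qt, e.symmL_apply (e.mem_target.1 hp), ← hQ, e.mk_symm (e.mem_target.1 hp)]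
  filter_upwards [eventually_sigPos_le Qt hcont, e.open_baseSet.mem_nhds hx] with y hy hyb
  rwa [← hQt x hx, ← hQt y hyb]

/-- A continuous fiberwise nondegenerate quadratic form on a vector bundle over a
connected base has constant inertia. -/
theorem inertia_constant_of_connected
    {X : Type*} [TopologicalSpace X] [ConnectedSpace X]
    {F : Type*} [NormedAddCommGroup F] [NormedSpace ℝ F] [FiniteDimensional ℝ F]
    {E : X → Type*} [∀ x, AddCommGroup (E x)] [∀ x, Module ℝ (E x)]
    [∀ x, TopologicalSpace (E x)] [TopologicalSpace (Bundle.TotalSpace F E)]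
    [FiberBundle F E] [VectorBundle ℝ F E]
    (q : Bundle.TotalSpace F E → ℝ) (hq : Continuous q)
    (Q : ∀ x, QuadraticForm ℝ (E x))
    (hQ : ∀ (x : X) (v : E x), q (Bundle.TotalSpace.mk x v) = Q x v)
    (hnd : ∀ (x : X) (u : E x),
      (∀ v : E x, QuadraticMap.polar (⇑(Q x)) u v = 0) → u = 0) :
    ∀ x y : X, posIndex (Q x) = posIndex (Q y) ∧ negIndex (Q x) = negIndex (Q y) := by
  have := VectorBundle.finiteDimensional ℝ F E
  have hdim : ∀ z, sigPos (Q z) + sigNeg (Q z) = finrank ℝ F := fun z =>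
    (sigPos_add_sigNeg_eq_finrank (Q z) (hnd z)).trans (VectorBundle.finrank_eq ℝ F E z)
  have hneg : ∀ z, ∀ᶠ y in 𝓝 z, sigNeg (Q z) ≤ sigNeg (Q y) := by
    simpa using eventually_sigPos_le_of_vectorBundle (-q) hq.neg (fun z => -Q z) (by simp [hQ])
  have hloc : IsLocallyConstant fun z => sigPos (Q z) :=
    (IsLocallyConstant.iff_eventually_eq _).2 fun z => by
      filter_upwards [eventually_sigPos_le_of_vectorBundle q hq Q hQ z, hneg z] with y hpy hny
      have := hdim z; have := hdim y; omega
  intro x y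
  have hxy := hloc.apply_eq_of_preconnectedSpace x y
  rw [posIndex_eq_sigPos, posIndex_eq_sigPos, negIndex_eq_sigNeg, negIndex_eq_sigNeg]
  exact ⟨hxy, by have := hdim x; have := hdim y; omega⟩
end

section
/- Let p : ℝ → ℝ/2πℤ be the quotient map and, for a natural number k, let ℓ_k : ℝ → ℝP¹ be the map sending α to the point of the real projective line ℝP¹ = ℙ(ℝ²) given by the span of the nonzero vector (cos(kα/2), sin(kα/2)). Let k ≠ k' be natural numbers and suppose F, F' : ℝ/2πℤ → ℝP¹ are continuous maps satisfying F ∘ p = ℓ_k and F' ∘ p = ℓ_{k'}. Then F and F' are not homotopic. -/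
/-!
The angle-doubling map `ℝP¹ → S¹`, `[x : y] ↦ (x + iy) / (x - iy)`, sends `ℓ_k(α)` to `e^{ikα}`.
A homotopy between `F` and `F'` therefore yields a homotopy `G`, through `2π`-periodic maps
`ℝ → S¹`, from `α ↦ e^{ikα}` to `α ↦ e^{ik'α}`. Lift `G` along the covering `exp : ℝ → S¹` to `Γ`.
The winding number `Γ(t, 2π) - Γ(t, 0)` lies in `2πℤ` and depends continuously on `t`, so it is
constant; but it equals `2πk` at `t = 0` and `2πk'` at `t = 1`.
-/

lemma cos_sin_ne_zero (θ : ℝ) : ((Real.cos θ, Real.sin θ) : ℝ × ℝ) ≠ 0 := by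
  intro h
  have h1 : Real.cos θ = 0 := congrArg Prod.fst h
  have h2 : Real.sin θ = 0 := congrArg Prod.snd h
  have h3 := Real.sin_sq_add_cos_sq θ
  rw [h1, h2] at h3
  norm_num at h3

/-- The quotient topology on the real projective line `ℙ(ℝ²)`, i.e. the quotient
of the subspace `ℝ² \ {0}` of `ℝ²` by the projectivization equivalence. -/
instance : TopologicalSpace (Projectivization ℝ (ℝ × ℝ)) :=
  inferInstanceAs (TopologicalSpace (Quotient (projectivizationSetoid ℝ (ℝ × ℝ))))

open unitInterval

theorem Circle.sub_eq_sub_of_exp_eq_exp {X : Type*} [TopologicalSpace X] [PreconnectedSpace X]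
    {f g : X → ℝ} (hf : Continuous f) (hg : Continuous g)
    (h : ∀ x, Circle.exp (f x) = Circle.exp (g x)) (x y : X) : f x - g x = f y - g y :=
  Circle.isCoveringMap_exp.const_of_comp (hf.sub hg)
    (fun a b => by simp only [Pi.sub_apply, Circle.exp_sub, h, div_self']) x y

theorem Circle.eq_of_homotopy_exp_mul {k k' T : ℝ} (hT : T ≠ 0) (G : C(I × ℝ, Circle))
    (hper : ∀ t, G (t, T) = G (t, 0)) (h₀ : ∀ α, G (0, α) = Circle.exp (k * α))
    (h₁ : ∀ α, G (1, α) = Circle.exp (k' * α)) : k = k' := by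
  let Γ := Circle.isCoveringMap_exp.liftHomotopy G ⟨(k * ·), by fun_prop⟩ h₀
  have hΓ (t : I) (α : ℝ) : Circle.exp (Γ (t, α)) = G (t, α) :=
    congr_fun (Circle.isCoveringMap_exp.liftHomotopy_lifts G _ h₀) (t, α)
  have hΓ₀ (α : ℝ) : Γ (0, α) = k * α := Circle.isCoveringMap_exp.liftHomotopy_zero G _ h₀ α
  have winding_const : Γ (0, T) - Γ (0, 0) = Γ (1, T) - Γ (1, 0) :=
    Circle.sub_eq_sub_of_exp_eq_exp (f := fun t => Γ (t, T)) (g := fun t => Γ (t, 0))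
      (by fun_prop) (by fun_prop) (fun t => by rw [hΓ, hΓ, hper]) 0 1
  have lift_one : Γ (1, T) - k' * T = Γ (1, 0) - k' * 0 :=
    Circle.sub_eq_sub_of_exp_eq_exp (f := fun α => Γ (1, α)) (by fun_prop) (by fun_prop)
      (fun α => by rw [hΓ, h₁]) T 0
  rw [hΓ₀, hΓ₀] at winding_const
  exact mul_right_cancel₀ hT (by linarith)

theorem ofReal_sub_ofReal_mul_I_ne_zero {v : ℝ × ℝ} (hv : v ≠ 0) :
    (v.1 : ℂ) - v.2 * Complex.I ≠ 0 := by
  intro h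
  exact hv (Prod.ext (by simpa using congrArg Complex.re h) (by simpa using congrArg Complex.im h))

/-- The angle-doubling map `[x : y] ↦ (x + iy) / (x - iy)`, i.e. `conj z / z` for `z = x - iy`. -/
noncomputable def projLineToCircle : Projectivization ℝ (ℝ × ℝ) → Circle :=
  Projectivization.lift (fun v => Circle.ofConjDivSelf _ (ofReal_sub_ofReal_mul_I_ne_zero v.2))
    (by
      rintro ⟨a, ha⟩ ⟨b, hb⟩ t rfl
      have ht : (t : ℂ) ≠ 0 := Complex.ofReal_ne_zero.2 (left_ne_zero_of_smul ha)
      ext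
      simp only [Circle.ofConjDivSelf_coe, Prod.smul_fst, Prod.smul_snd, smul_eq_mul,
        Complex.ofReal_mul]
      rw [show (t : ℂ) * b.1 - t * b.2 * Complex.I = t * (b.1 - b.2 * Complex.I) by ring,
        map_mul, Complex.conj_ofReal, mul_div_mul_left _ _ ht])

theorem continuous_projLineToCircle : Continuous projLineToCircle :=
  Continuous.quotient_lift (Continuous.subtype_mk ((by fun_prop : Continuous _).div
    (by fun_prop) fun v => ofReal_sub_ofReal_mul_I_ne_zero v.2) _) _

theorem projLineToCircle_mk_cos_sin_half (x : ℝ) :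
    projLineToCircle (Projectivization.mk ℝ (Real.cos (x / 2), Real.sin (x / 2))
      (cos_sin_ne_zero _)) = Circle.exp x := by
  have h : (Real.cos (x / 2) : ℂ) - Real.sin (x / 2) * Complex.I =
      Complex.exp (-(x / 2 : ℝ) * Complex.I) := by
    rw [Complex.exp_mul_I, Complex.cos_neg, Complex.sin_neg, Complex.ofReal_cos,
      Complex.ofReal_sin]
    ring
  ext
  simp only [projLineToCircle, Projectivization.lift_mk, Circle.ofConjDivSelf_coe,
    Circle.coe_exp, h, ← Complex.exp_conj, ← Complex.exp_sub]
  congr 1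
  simp only [map_mul, map_neg, Complex.conj_ofReal, Complex.conj_I]
  push_cast
  ring

/-- The line subbundles `l_k` and `l_{k'}` of the trivial rank 2 bundle on the
circle, given by the Gauss maps `α ↦ [cos (kα/2) : sin (kα/2)]`, are not
homotopic for `k ≠ k'`: any continuous maps `F, F'` on `ℝ/2πℤ` induced by these
Gauss maps are non-homotopic. -/
theorem gauss_maps_not_homotopic (k k' : ℕ) (hkk' : k ≠ k')
    (F F' : AddCircle (2 * Real.pi) → Projectivization ℝ (ℝ × ℝ))
    (hF : Continuous F) (hF' : Continuous F')
    (hFk : ∀ α : ℝ, F (α : AddCircle (2 * Real.pi)) =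
      Projectivization.mk ℝ (Real.cos (k * α / 2), Real.sin (k * α / 2))
        (cos_sin_ne_zero _))
    (hFk' : ∀ α : ℝ, F' (α : AddCircle (2 * Real.pi)) =
      Projectivization.mk ℝ (Real.cos (k' * α / 2), Real.sin (k' * α / 2))
        (cos_sin_ne_zero _)) :
    ¬ ContinuousMap.Homotopic ⟨F, hF⟩ ⟨F', hF'⟩ := by
  rintro ⟨H⟩
  let G : C(I × ℝ, Circle) := ⟨fun q => projLineToCircle (H (q.1, q.2)),
    continuous_projLineToCircle.comp (by fun_prop)⟩
  have : (k : ℝ) = k' :=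
    Circle.eq_of_homotopy_exp_mul Real.two_pi_pos.ne' G
      (fun t => by simp only [G, ContinuousMap.coe_mk, AddCircle.coe_period, AddCircle.coe_zero])
      (fun α => by simp only [G, ContinuousMap.coe_mk, H.apply_zero, hFk,
        projLineToCircle_mk_cos_sin_half])
      (fun α => by simp only [G, ContinuousMap.coe_mk, H.apply_one, hFk',
        projLineToCircle_mk_cos_sin_half])
  exact hkk' (by exact_mod_cast this)
end
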